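/- arXiv:1302.2532 — 10 statements merged into one kernel-verified Lean document; each statement's English description precedes it below -/
import Mathlib

section
/- Let a > 0 and b, c real. The function ψ(x) = exp(-(√a/6)x⁶ - (b/(8√a))x⁴ + ((b²-4ac)/(16a^{3/2}))x²) satisfies -ψ''(x) + (ax¹⁰ + bx⁸ + cx⁶ + dx⁴ + ex²)ψ(x) = E₀ψ(x) for all real x, where E₀ = (4ac - b²)/(8a^{3/2}), d = -(40a^{5/2} + b³ - 4abc)/(8a²), and e = -(96a^{5/2}b - b⁴ + 8ab²c - 16a²c²)/(64a³). -/
/-! Writing `ψ = exp W`, one has `ψ'' = (W'' + W'²) ψ`, so `ψ` solves `-ψ'' + V ψ = E ψ` exactly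
when `V = W'' + W'² + E`. The three coefficients of the even sextic `W` are chosen so that `W'²`
matches `a, b, c` in degrees 10, 8, 6; the remaining coefficients of `W'' + W'²` then give `d`, `e`
and `-E₀`. Substituting `a = (√a)²` turns this into a rational-function identity in `√a`. -/

open Real

theorem deriv_deriv_exp_comp {f f' f'' : ℝ → ℝ} (hf : ∀ y, HasDerivAt f (f' y) y)
    (hf' : ∀ y, HasDerivAt f' (f'' y) y) (x : ℝ) :
    deriv (deriv fun y => exp (f y)) x = (f'' x + f' x ^ 2) * exp (f x) := by
  have h_deriv : deriv (fun y => exp (f y)) = fun y => f' y * exp (f y) := by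
    funext y
    rw [(hf y).exp.deriv, mul_comm]
  rw [h_deriv]
  exact ((hf' x).mul (hf x).exp).deriv.trans (by ring)

theorem exp_solves_schrodinger {f f' f'' V : ℝ → ℝ} {E : ℝ} (hf : ∀ y, HasDerivAt f (f' y) y)
    (hf' : ∀ y, HasDerivAt f' (f'' y) y) (hV : ∀ y, V y = f'' y + f' y ^ 2 + E) (x : ℝ) :
    -(deriv (deriv fun y => exp (f y)) x) + V x * exp (f x) = E * exp (f x) := by
  rw [deriv_deriv_exp_comp hf hf', hV]
  ring

theorem hasDerivAt_even_sextic (A B C x : ℝ) :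
    HasDerivAt (fun y => A * y ^ 6 + B * y ^ 4 + C * y ^ 2)
      (6 * A * x ^ 5 + 4 * B * x ^ 3 + 2 * C * x) x := by
  have := (((hasDerivAt_pow 6 x).const_mul A).add ((hasDerivAt_pow 4 x).const_mul B)).add
    ((hasDerivAt_pow 2 x).const_mul C)
  exact this.congr_deriv (by norm_num; ring)

theorem hasDerivAt_odd_quintic (A B C x : ℝ) :
    HasDerivAt (fun y => 6 * A * y ^ 5 + 4 * B * y ^ 3 + 2 * C * y)
      (30 * A * x ^ 4 + 12 * B * x ^ 2 + 2 * C) x := by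
  have := (((hasDerivAt_pow 5 x).const_mul (6 * A)).add
    ((hasDerivAt_pow 3 x).const_mul (4 * B))).add ((hasDerivAt_id x).const_mul (2 * C))
  exact this.congr_deriv (by norm_num; ring)

theorem decatic_ground_state
    (a b c E₀ d e : ℝ) (ha : 0 < a)
    (hE : E₀ = (4 * a * c - b ^ 2) / (8 * (Real.sqrt a) ^ 3))
    (hd : d = -(40 * (Real.sqrt a) ^ 5 + b ^ 3 - 4 * a * b * c) / (8 * a ^ 2))
    (he : e = -(96 * (Real.sqrt a) ^ 5 * b - b ^ 4 + 8 * a * b ^ 2 * c - 16 * a ^ 2 * c ^ 2)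
          / (64 * a ^ 3))
    (ψ : ℝ → ℝ)
    (hψ : ψ = fun x => Real.exp (-(Real.sqrt a / 6) * x ^ 6 - (b / (8 * Real.sqrt a)) * x ^ 4
          + ((b ^ 2 - 4 * a * c) / (16 * (Real.sqrt a) ^ 3)) * x ^ 2)) :
    ∀ x : ℝ, -(deriv (deriv ψ) x)
      + (a * x ^ 10 + b * x ^ 8 + c * x ^ 6 + d * x ^ 4 + e * x ^ 2) * ψ x
      = E₀ * ψ x := by
  set s := √a
  have hs : s ≠ 0 := (sqrt_pos.mpr ha).ne'
  have hsa : s ^ 2 = a := sq_sqrt ha.le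
  clear_value s
  subst hsa
  have hψ_exp : ψ = fun x => exp (-(s / 6) * x ^ 6 + -(b / (8 * s)) * x ^ 4
      + (b ^ 2 - 4 * s ^ 2 * c) / (16 * s ^ 3) * x ^ 2) := by
    rw [hψ]; funext x; congr 1; ring
  subst hψ_exp hE hd he
  refine exp_solves_schrodinger (hasDerivAt_even_sextic _ _ _) (hasDerivAt_odd_quintic _ _ _)
    fun x => ?_
  field_simp
  ring
end

section
/- Let a > 0 and b, c real. The function ψ(x) = x·exp(-(√a/6)x⁶ - (b/(8√a))x⁴ + ((b²-4ac)/(16a^{3/2}))x²) satisfies -ψ''(x) + (ax¹⁰ + bx⁸ + cx⁶ + dx⁴ + ex²)ψ(x) = E₁ψ(x) for all real x, where E₁ = 3(4ac - b²)/(8a^{3/2}), d = -(56a^{5/2} + b³ - 4abc)/(8a²), and e = -(160a^{5/2}b - b⁴ + 8ab²c - 16a²c²)/(64a³). -/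
/-!
Writing `ψ = x e^φ` with `φ` the even sextic in the exponent, one has
`ψ'' = (2φ' + xφ'' + xφ'²) e^φ`, so the Schrödinger equation reduces to the polynomial identity
`2φ' + xφ'' + xφ'² = (V - E₁) x`. The coefficients of `φ` are chosen so that `φ'²` reproduces the
`x¹⁰, x⁸, x⁶` terms of `V`, and `d`, `e`, `E₁` are then read off from the remaining powers of `x`.
-/

open Real

theorem deriv_deriv_id_mul_exp {φ φ' φ'' : ℝ → ℝ} (hφ : ∀ x, HasDerivAt φ (φ' x) x)
    (hφ' : ∀ x, HasDerivAt φ' (φ'' x) x) (x : ℝ) :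
    deriv (deriv fun x => x * exp (φ x)) x
      = (2 * φ' x + x * φ'' x + x * φ' x ^ 2) * exp (φ x) := by
  have hψ' : deriv (fun x => x * exp (φ x)) = fun x => (1 + x * φ' x) * exp (φ x) := by
    funext y
    exact ((hasDerivAt_id y).mul (hφ y).exp).deriv.trans (by simp only [id_eq]; ring)
  rw [hψ']
  exact ((((hasDerivAt_id x).mul (hφ' x)).const_add 1).mul (hφ x).exp).deriv.trans
    (by simp only [id_eq, Pi.mul_apply]; ring)

section Decatic

variable (s b c : ℝ)

theorem hasDerivAt_decatic_exponent (x : ℝ) :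
    HasDerivAt (fun x => -(s / 6) * x ^ 6 - (b / (8 * s)) * x ^ 4
        + ((b ^ 2 - 4 * s ^ 2 * c) / (16 * s ^ 3)) * x ^ 2)
      (-s * x ^ 5 - (b / (2 * s)) * x ^ 3 + ((b ^ 2 - 4 * s ^ 2 * c) / (8 * s ^ 3)) * x) x := by
  refine (((hasDerivAt_pow 6 x).const_mul (-(s / 6))).sub
    ((hasDerivAt_pow 4 x).const_mul (b / (8 * s)))).add
    ((hasDerivAt_pow 2 x).const_mul ((b ^ 2 - 4 * s ^ 2 * c) / (16 * s ^ 3))) |>.congr_deriv ?_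
  push_cast
  ring

theorem hasDerivAt_decatic_exponent_deriv (x : ℝ) :
    HasDerivAt (fun x => -s * x ^ 5 - (b / (2 * s)) * x ^ 3
        + ((b ^ 2 - 4 * s ^ 2 * c) / (8 * s ^ 3)) * x)
      (-(5 * s) * x ^ 4 - (3 * b / (2 * s)) * x ^ 2 + (b ^ 2 - 4 * s ^ 2 * c) / (8 * s ^ 3)) x := by
  refine (((hasDerivAt_pow 5 x).const_mul (-s)).sub
    ((hasDerivAt_pow 3 x).const_mul (b / (2 * s)))).add
    ((hasDerivAt_id' x).const_mul ((b ^ 2 - 4 * s ^ 2 * c) / (8 * s ^ 3))) |>.congr_deriv ?_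
  push_cast
  ring

theorem decatic_riccati_identity (hs : s ≠ 0) (x : ℝ) :
    let φ' := -s * x ^ 5 - (b / (2 * s)) * x ^ 3 + ((b ^ 2 - 4 * s ^ 2 * c) / (8 * s ^ 3)) * x
    let φ'' := -(5 * s) * x ^ 4 - (3 * b / (2 * s)) * x ^ 2 + (b ^ 2 - 4 * s ^ 2 * c) / (8 * s ^ 3)
    2 * φ' + x * φ'' + x * φ' ^ 2
      = (s ^ 2 * x ^ 10 + b * x ^ 8 + c * x ^ 6
          - (56 * s ^ 5 + b ^ 3 - 4 * s ^ 2 * b * c) / (8 * s ^ 4) * x ^ 4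
          - (160 * s ^ 5 * b - b ^ 4 + 8 * s ^ 2 * b ^ 2 * c - 16 * s ^ 4 * c ^ 2) / (64 * s ^ 6) * x ^ 2
          - 3 * (4 * s ^ 2 * c - b ^ 2) / (8 * s ^ 3)) * x := by
  intro φ' φ''
  simp only [φ', φ'']
  field_simp
  ring

end Decatic

theorem decatic_first_excited_state
    (a b c E₁ d e : ℝ) (ha : 0 < a)
    (hE : E₁ = 3 * (4 * a * c - b ^ 2) / (8 * (Real.sqrt a) ^ 3))
    (hd : d = -(56 * (Real.sqrt a) ^ 5 + b ^ 3 - 4 * a * b * c) / (8 * a ^ 2))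
    (he : e = -(160 * (Real.sqrt a) ^ 5 * b - b ^ 4 + 8 * a * b ^ 2 * c - 16 * a ^ 2 * c ^ 2)
          / (64 * a ^ 3))
    (ψ : ℝ → ℝ)
    (hψ : ψ = fun x => x * Real.exp (-(Real.sqrt a / 6) * x ^ 6 - (b / (8 * Real.sqrt a)) * x ^ 4
          + ((b ^ 2 - 4 * a * c) / (16 * (Real.sqrt a) ^ 3)) * x ^ 2)) :
    ∀ x : ℝ, -(deriv (deriv ψ) x)
      + (a * x ^ 10 + b * x ^ 8 + c * x ^ 6 + d * x ^ 4 + e * x ^ 2) * ψ x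
      = E₁ * ψ x := by
  subst hE hd he hψ
  intro x
  obtain ⟨s, hs, rfl⟩ : ∃ s : ℝ, 0 < s ∧ s ^ 2 = a := ⟨√a, sqrt_pos.mpr ha, sq_sqrt ha.le⟩
  rw [sqrt_sq hs.le, deriv_deriv_id_mul_exp (hasDerivAt_decatic_exponent s b c)
    (hasDerivAt_decatic_exponent_deriv s b c)]
  linear_combination (-exp (-(s / 6) * x ^ 6 - (b / (8 * s)) * x ^ 4
    + ((b ^ 2 - 4 * s ^ 2 * c) / (16 * s ^ 3)) * x ^ 2)) * decatic_riccati_identity s b c hs.ne' x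
end

section
/- The function ψ₀(x) = exp(-(3/16)x² + (1/8)x⁴ - (1/6)x⁶) satisfies -ψ₀''(x) + ((105/64)x² - (43/8)x⁴ + x⁶ - x⁸ + x¹⁰)ψ₀(x) = (3/8)ψ₀(x) for all real x. -/
/-! If `ψ = exp ∘ W`, then `ψ'' = (W'' + W'²) ψ`, so `ψ` solves `-ψ'' + V ψ = E ψ` exactly when
`V - E = W'' + W'²`. For `W = -(3/16)x² + (1/8)x⁴ - (1/6)x⁶` this Riccati identity is a polynomial
identity. -/

open Real

theorem deriv_deriv_exp_comp_eq {W W' W'' : ℝ → ℝ} (hW : ∀ y, HasDerivAt W (W' y) y)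
    (hW' : ∀ y, HasDerivAt W' (W'' y) y) (x : ℝ) :
    deriv (deriv fun y => exp (W y)) x = (W'' x + W' x ^ 2) * exp (W x) := by
  have hderiv : deriv (fun y => exp (W y)) = fun y => exp (W y) * W' y :=
    funext fun y => (hW y).exp.deriv
  rw [hderiv]
  exact ((hW x).exp.mul (hW' x)).deriv.trans (by ring)

theorem schrodinger_exp_of_riccati {W W' W'' V : ℝ → ℝ} {E : ℝ}
    (hW : ∀ y, HasDerivAt W (W' y) y) (hW' : ∀ y, HasDerivAt W' (W'' y) y)
    (hV : ∀ y, V y - E = W'' y + W' y ^ 2) (x : ℝ) :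
    -deriv (deriv fun y => exp (W y)) x + V x * exp (W x) = E * exp (W x) := by
  rw [deriv_deriv_exp_comp_eq hW hW' x]
  linear_combination exp (W x) * hV x

theorem decatic_example_ground_state
    (ψ : ℝ → ℝ)
    (hψ : ψ = fun x => Real.exp (-(3/16) * x ^ 2 + (1/8) * x ^ 4 - (1/6) * x ^ 6)) :
    ∀ x : ℝ, -(deriv (deriv ψ) x)
      + ((105/64) * x ^ 2 - (43/8) * x ^ 4 + x ^ 6 - x ^ 8 + x ^ 10) * ψ x
      = (3/8) * ψ x := by
  subst hψ
  refine schrodinger_exp_of_riccati (W' := fun x => -(3/8) * x + (1/2) * x ^ 3 - x ^ 5)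
    (W'' := fun x => -(3/8) + (3/2) * x ^ 2 - 5 * x ^ 4) (fun y => ?_) (fun y => ?_) (fun y => by ring)
  · exact ((((hasDerivAt_pow 2 y).const_mul _).add ((hasDerivAt_pow 4 y).const_mul _)).sub
      ((hasDerivAt_pow 6 y).const_mul _)).congr_deriv (by ring)
  · exact ((((hasDerivAt_id y).const_mul _).add ((hasDerivAt_pow 3 y).const_mul _)).sub
      (hasDerivAt_pow 5 y)).congr_deriv (by ring)
end

section
/- The function ψ₁(x) = x·exp(-(3/16)x² + (1/8)x⁴ - (1/6)x⁶) satisfies -ψ₁''(x) + ((169/64)x² - (59/8)x⁴ + x⁶ - x⁸ + x¹⁰)ψ₁(x) = (9/8)ψ₁(x) for all real x. -/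
/-!
Write `ψ = x · e^W` with `W = -(3/16)x² + (1/8)x⁴ - (1/6)x⁶`. For any `f · e^g` one has
`(f e^g)'' = (f'' + 2 f' g' + f (g'' + g'²)) e^g`, so with `f = x` the Schrödinger equation
reduces, after cancelling `e^W`, to the polynomial identity `-(2W' + x(W'' + W'²)) + V x = (9/8) x`.
-/

open Real

theorem hasDerivAt_mul_exp {f g : ℝ → ℝ} {f' g' x : ℝ} (hf : HasDerivAt f f' x)
    (hg : HasDerivAt g g' x) :
    HasDerivAt (fun y => f y * exp (g y)) ((f' + f x * g') * exp (g x)) x :=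
  (hf.mul hg.exp).congr_deriv (by ring)

theorem deriv_deriv_mul_exp {f f' g g' : ℝ → ℝ} {f'' g'' x : ℝ}
    (hf : ∀ y, HasDerivAt f (f' y) y) (hg : ∀ y, HasDerivAt g (g' y) y)
    (hf' : HasDerivAt f' f'' x) (hg' : HasDerivAt g' g'' x) :
    deriv (deriv fun y => f y * exp (g y)) x
      = (f'' + 2 * f' x * g' x + f x * (g'' + g' x ^ 2)) * exp (g x) := by
  have hderiv : deriv (fun y => f y * exp (g y)) = fun y => (f' y + f y * g' y) * exp (g y) :=
    funext fun y => (hasDerivAt_mul_exp (hf y) (hg y)).deriv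
  have hsum : HasDerivAt (fun y => f' y + f y * g' y) (f'' + (f' x * g' x + f x * g'')) x :=
    hf'.add ((hf x).mul hg')
  rw [hderiv, (hasDerivAt_mul_exp hsum (hg x)).deriv]
  ring

noncomputable def decaticPhase (x : ℝ) : ℝ := -(3/16) * x ^ 2 + (1/8) * x ^ 4 - (1/6) * x ^ 6

noncomputable def decaticPhaseDeriv (x : ℝ) : ℝ := -(3/8) * x + (1/2) * x ^ 3 - x ^ 5

theorem hasDerivAt_decaticPhase (x : ℝ) :
    HasDerivAt decaticPhase (decaticPhaseDeriv x) x := by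
  have h := (((hasDerivAt_pow 2 x).const_mul (-(3/16) : ℝ)).add
    ((hasDerivAt_pow 4 x).const_mul (1/8 : ℝ))).sub ((hasDerivAt_pow 6 x).const_mul (1/6 : ℝ))
  exact h.congr_deriv (by rw [decaticPhaseDeriv]; norm_num; ring)

theorem hasDerivAt_decaticPhaseDeriv (x : ℝ) :
    HasDerivAt decaticPhaseDeriv (-(3/8) + (3/2) * x ^ 2 - 5 * x ^ 4) x := by
  have h := (((hasDerivAt_id' x).const_mul (-(3/8) : ℝ)).add
    ((hasDerivAt_pow 3 x).const_mul (1/2 : ℝ))).sub (hasDerivAt_pow 5 x)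
  exact h.congr_deriv (by norm_num; ring)

theorem decatic_example_first_excited_state
    (ψ : ℝ → ℝ)
    (hψ : ψ = fun x => x * Real.exp (-(3/16) * x ^ 2 + (1/8) * x ^ 4 - (1/6) * x ^ 6)) :
    ∀ x : ℝ, -(deriv (deriv ψ) x)
      + ((169/64) * x ^ 2 - (59/8) * x ^ 4 + x ^ 6 - x ^ 8 + x ^ 10) * ψ x
      = (9/8) * ψ x := by
  intro x
  have hψ'' : deriv (deriv ψ) x = (2 * decaticPhaseDeriv x
      + x * ((-(3/8) + (3/2) * x ^ 2 - 5 * x ^ 4) + decaticPhaseDeriv x ^ 2))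
        * exp (decaticPhase x) := by
    rw [show ψ = fun y => y * exp (decaticPhase y) from hψ,
      deriv_deriv_mul_exp (fun y => hasDerivAt_id' y) hasDerivAt_decaticPhase
        (hasDerivAt_const x 1) (hasDerivAt_decaticPhaseDeriv x)]
    ring
  rw [hψ'', hψ]
  simp only [decaticPhase, decaticPhaseDeriv]
  ring
end

section
/- For a > 0 and real b, c, d, e with 8(4n+5)a^{5/2} + 8a²d - 4abc + b³ = 0 failing for every nonnegative integer n and 8(4n+7)a^{5/2} + 8a²d - 4abc + b³ = 0 failing for every nonnegative integer n, the equation χ'' - (2√a x⁵ + (b/√a)x³ - ((b²-4ac)/(4a^{3/2}))x)χ' - ((4ac-b²)/(8a^{3/2}) - E + ((64a³e + 96a^{5/2}b - b⁴ + 8ab²c - 16a²c²)/(64a³))x² + ((8a²d + 40a^{5/2} + b³ - 4abc)/(8a²))x⁴)χ = 0 has no nonzero polynomial solution χ for any real E. -/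
/-!
If `χ` is a polynomial solution of degree `n`, the top coefficient (of `x ^ (n + 4)`) of the
equation only sees `2 √a x⁵ χ'` and the `x⁴`-term of the potential, so
`2 √a n + (8a²d + 40a^{5/2} + b³ - 4abc) / (8a²) = 0`, i.e.
`8 (2n + 5) a^{5/2} + 8a²d - 4abc + b³ = 0`. According to the parity of `n` this is one of the two
excluded criteria.
-/

open Polynomial

namespace Polynomial

variable {R : Type*} [CommRing R]

theorem natDegree_X_mul_derivative_le (p : R[X]) :
    (X * derivative p).natDegree ≤ p.natDegree := by
  rcases p.natDegree.eq_zero_or_pos with h | h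
  · simp [derivative_of_natDegree_zero h]
  · calc (X * derivative p).natDegree
        ≤ X.natDegree + (derivative p).natDegree := natDegree_mul_le
      _ ≤ 1 + (p.natDegree - 1) := add_le_add natDegree_X_le (natDegree_derivative_le p)
      _ = p.natDegree := by omega

theorem coeff_X_mul_derivative (p : R[X]) (n : ℕ) :
    (X * derivative p).coeff n = n * p.coeff n := by
  cases n with
  | zero => simp
  | succ n => rw [coeff_X_mul, coeff_derivative]; push_cast; ring

theorem coeff_derivative_derivative_sub_mul_X_mul_derivative_sub_mul {A B : R[X]} {k : ℕ}
    (hA : A.natDegree ≤ k) (hB : B.natDegree ≤ k) (p : R[X]) :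
    (derivative (derivative p) - A * (X * derivative p) - B * p).coeff (k + p.natDegree) =
      -((A.coeff k * p.natDegree + B.coeff k) * p.leadingCoeff) := by
  have h_second : (derivative (derivative p)).coeff (k + p.natDegree) = 0 := by
    rw [coeff_derivative, coeff_derivative, coeff_eq_zero_of_natDegree_lt (by omega)]
    simp
  rw [coeff_sub, coeff_sub, h_second,
    coeff_mul_add_eq_of_natDegree_le hA (natDegree_X_mul_derivative_le p),
    coeff_mul_add_eq_of_natDegree_le hB le_rfl, coeff_X_mul_derivative, leadingCoeff]
  ring

theorem coeff_mul_natDegree_add_coeff_eq_zero [NoZeroDivisors R] {A B p : R[X]} {k : ℕ}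
    (hA : A.natDegree ≤ k) (hB : B.natDegree ≤ k) (hp : p ≠ 0)
    (h : derivative (derivative p) - A * (X * derivative p) - B * p = 0) :
    A.coeff k * p.natDegree + B.coeff k = 0 := by
  have := coeff_derivative_derivative_sub_mul_X_mul_derivative_sub_mul hA hB p
  rw [h, coeff_zero, eq_comm, neg_eq_zero] at this
  exact (mul_eq_zero.mp this).resolve_right (leadingCoeff_ne_zero.mpr hp)

end Polynomial

theorem no_polynomial_solution_when_criterion_fails
    (a b c d e : ℝ) (ha : 0 < a)
    (h1 : ∀ n : ℕ, 8 * (4 * (n : ℝ) + 5) * (Real.sqrt a) ^ 5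
          + 8 * a ^ 2 * d - 4 * a * b * c + b ^ 3 ≠ 0)
    (h2 : ∀ n : ℕ, 8 * (4 * (n : ℝ) + 7) * (Real.sqrt a) ^ 5
          + 8 * a ^ 2 * d - 4 * a * b * c + b ^ 3 ≠ 0) :
    ∀ E : ℝ, ¬ ∃ χ : Polynomial ℝ, χ ≠ 0 ∧ ∀ x : ℝ,
      (Polynomial.derivative (Polynomial.derivative χ)).eval x
      - (2 * Real.sqrt a * x ^ 5 + (b / Real.sqrt a) * x ^ 3
          - ((b ^ 2 - 4 * a * c) / (4 * (Real.sqrt a) ^ 3)) * x)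
            * (Polynomial.derivative χ).eval x
      - ((4 * a * c - b ^ 2) / (8 * (Real.sqrt a) ^ 3) - E
          + ((64 * a ^ 3 * e + 96 * (Real.sqrt a) ^ 5 * b - b ^ 4 + 8 * a * b ^ 2 * c
              - 16 * a ^ 2 * c ^ 2) / (64 * a ^ 3)) * x ^ 2
          + ((8 * a ^ 2 * d + 40 * (Real.sqrt a) ^ 5 + b ^ 3 - 4 * a * b * c)
              / (8 * a ^ 2)) * x ^ 4) * χ.eval x = 0 := by
  rintro E ⟨χ, hχ, hχ_ode⟩
  set s := Real.sqrt a
  set K := (8 * a ^ 2 * d + 40 * s ^ 5 + b ^ 3 - 4 * a * b * c) / (8 * a ^ 2)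
  have hsa : s ^ 2 = a := Real.sq_sqrt ha.le
  have hode : derivative (derivative χ)
      - (C (2 * s) * X ^ 4 + C (b / s) * X ^ 2 - C ((b ^ 2 - 4 * a * c) / (4 * s ^ 3)))
        * (X * derivative χ)
      - (C ((4 * a * c - b ^ 2) / (8 * s ^ 3) - E)
        + C ((64 * a ^ 3 * e + 96 * s ^ 5 * b - b ^ 4 + 8 * a * b ^ 2 * c - 16 * a ^ 2 * c ^ 2)
          / (64 * a ^ 3)) * X ^ 2 + C K * X ^ 4) * χ = 0 := by
    refine Polynomial.funext fun x => ?_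
    simp only [eval_sub, eval_add, eval_mul, eval_pow, eval_C, eval_X, eval_zero]
    linear_combination hχ_ode x
  have hdeg := coeff_mul_natDegree_add_coeff_eq_zero (k := 4)
    (by compute_degree) (by compute_degree) hχ hode
  simp only [coeff_add, coeff_sub, coeff_C_mul_X_pow, coeff_C] at hdeg
  norm_num at hdeg
  have hcrit :
      8 * (2 * (χ.natDegree : ℝ) + 5) * s ^ 5 + 8 * a ^ 2 * d - 4 * a * b * c + b ^ 3 = 0 := by
    simp only [K] at hdeg
    field_simp at hdeg
    linear_combination hdeg + 16 * (χ.natDegree : ℝ) * s * (s ^ 2 + a) * hsa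
  obtain ⟨m, hm | hm⟩ := Nat.even_or_odd' χ.natDegree <;> rw [hm] at hcrit
  · exact h1 m (by push_cast at hcrit; linear_combination hcrit)
  · exact h2 m (by push_cast at hcrit; linear_combination hcrit)
end

section
/- For the decatic potential V(x) = ax¹⁰ + cx⁶ (with a > 0, c ≠ 0 real, b = d = e = 0), there exist no real E and no nonzero polynomial χ such that ψ(x) = χ(x)·exp(-(√a/6)x⁶ + (c/(4√a))x²) satisfies -ψ'' + Vψ = Eψ for all real x. -/
/-!
Writing `ψ = χ · exp φ` with `φ = -(√a/6) x⁶ + (c/(4√a)) x²`, the equation `-ψ'' + V ψ = E ψ`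
becomes the polynomial identity `χ'' + 2 χ' φ' + χ φ'' = (V - φ'² - E) χ`. Since `deg φ' = 5`, the
left side has degree at most `deg χ + 4`, whereas `V - φ'² - E = 2c x⁶ - (c²/(4a)) x² - E` has
degree `6` because `c ≠ 0`.
-/

open Polynomial

namespace Polynomial

section Semiring

variable {R : Type*} [Semiring R]

theorem natDegree_two_mul_derivative_mul_le (p F : R[X]) :
    (2 * derivative p * F).natDegree ≤ p.natDegree + F.natDegree - 1 := by
  rcases eq_or_ne p.natDegree 0 with hp | hp
  · simp [derivative_of_natDegree_zero hp]
  have hp' := natDegree_derivative_lt hp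
  have h2p' : (2 * derivative p).natDegree ≤ (derivative p).natDegree := by
    simpa using natDegree_mul_le (p := (2 : R[X])) (q := derivative p)
  have := natDegree_mul_le (p := 2 * derivative p) (q := F)
  omega

theorem natDegree_le_of_derivative_eq_mul [NoZeroDivisors R] {p F W : R[X]} {m : ℕ}
    (hp : p ≠ 0) (hF : F.natDegree ≤ m + 1)
    (h : derivative (derivative p) + 2 * derivative p * F + p * derivative F = W * p) :
    W.natDegree ≤ m := by
  rcases eq_or_ne W 0 with rfl | hW
  · simp
  have hp'' := natDegree_derivative_le (derivative p)
  have hp' := natDegree_derivative_le p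
  have hpF := natDegree_two_mul_derivative_mul_le p F
  have hF' := natDegree_derivative_le F
  have hpF' := natDegree_mul_le (p := p) (q := derivative F)
  have hWp : (W * p).natDegree ≤ p.natDegree + m := by
    rw [← h]
    refine natDegree_add_le_of_degree_le (natDegree_add_le_of_degree_le ?_ ?_) ?_ <;> omega
  rw [natDegree_mul hW hp] at hWp
  omega

end Semiring

section CommRing

variable {R : Type*} [CommRing R]

theorem derivative_C_mul_X_pow_six_add_C_mul_X_sq (t w : R) :
    derivative (C t * X ^ 6 + C w * X ^ 2) = C (6 * t) * X ^ 5 + C (2 * w) * X := by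
  rw [derivative_add, derivative_C_mul_X_pow, derivative_C_mul_X_pow]
  push_cast
  ring_nf

theorem sq_derivative_C_mul_X_pow_six_add_C_mul_X_sq (t w : R) :
    derivative (C t * X ^ 6 + C w * X ^ 2) ^ 2
      = C (36 * t ^ 2) * X ^ 10 + C (24 * t * w) * X ^ 6 + C (4 * w ^ 2) * X ^ 2 := by
  rw [derivative_C_mul_X_pow_six_add_C_mul_X_sq]
  simp only [map_mul, map_pow, map_ofNat]
  ring

end CommRing

end Polynomial

theorem deriv_eval_mul_exp_eval (p φ : ℝ[X]) :
    deriv (fun x => p.eval x * Real.exp (φ.eval x)) =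
      fun x => (derivative p + p * derivative φ).eval x * Real.exp (φ.eval x) := by
  funext x
  have h : HasDerivAt (fun x => p.eval x * Real.exp (φ.eval x)) _ x :=
    (p.hasDerivAt x).mul (φ.hasDerivAt x).exp
  rw [h.deriv, eval_add, eval_mul]
  ring

theorem deriv_deriv_eval_mul_exp_eval (p φ : ℝ[X]) :
    deriv (deriv fun x => p.eval x * Real.exp (φ.eval x)) =
      fun x => (derivative (derivative p) + 2 * derivative p * derivative φ
        + p * derivative (derivative φ) + p * derivative φ ^ 2).eval x * Real.exp (φ.eval x) := by
  rw [deriv_eval_mul_exp_eval, deriv_eval_mul_exp_eval]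
  funext x
  congr 2
  simp only [derivative_add, derivative_mul]
  ring

theorem derivative_eq_mul_of_schrodinger {p φ V : ℝ[X]} {E : ℝ}
    (h : ∀ x : ℝ, -(deriv (deriv fun x => p.eval x * Real.exp (φ.eval x)) x)
      + V.eval x * (p.eval x * Real.exp (φ.eval x)) = E * (p.eval x * Real.exp (φ.eval x))) :
    derivative (derivative p) + 2 * derivative p * derivative φ + p * derivative (derivative φ)
      = (V - derivative φ ^ 2 - C E) * p := by
  refine Polynomial.funext fun x => ?_
  have hx := h x
  rw [deriv_deriv_eval_mul_exp_eval] at hx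
  simp only [eval_add, eval_mul, eval_sub, eval_pow, eval_C, eval_ofNat] at hx ⊢
  apply mul_right_cancel₀ (Real.exp_ne_zero (φ.eval x))
  linear_combination -hx

theorem no_quasi_exact_solution_for_ax10_plus_cx6
    (a c : ℝ) (ha : 0 < a) (hc : c ≠ 0) :
    ¬ ∃ (E : ℝ) (χ : Polynomial ℝ), χ ≠ 0 ∧ ∀ x : ℝ,
      -(deriv (deriv (fun x : ℝ => χ.eval x
          * Real.exp (-(Real.sqrt a / 6) * x ^ 6 + (c / (4 * Real.sqrt a)) * x ^ 2))) x)
      + (a * x ^ 10 + c * x ^ 6)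
          * (χ.eval x * Real.exp (-(Real.sqrt a / 6) * x ^ 6 + (c / (4 * Real.sqrt a)) * x ^ 2))
      = E * (χ.eval x
          * Real.exp (-(Real.sqrt a / 6) * x ^ 6 + (c / (4 * Real.sqrt a)) * x ^ 2)) := by
  rintro ⟨E, χ, hχ, hode⟩
  set s := Real.sqrt a
  have hs : s ≠ 0 := (Real.sqrt_pos.2 ha).ne'
  set φ : ℝ[X] := C (-(s / 6)) * X ^ 6 + C (c / (4 * s)) * X ^ 2
  set V : ℝ[X] := C a * X ^ 10 + C c * X ^ 6
  have hpoly : derivative (derivative χ) + 2 * derivative χ * derivative φ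
      + χ * derivative (derivative φ) = (V - derivative φ ^ 2 - C E) * χ :=
    derivative_eq_mul_of_schrodinger fun x => by simpa [φ, V] using hode x
  have hφ' : (derivative φ).natDegree ≤ 4 + 1 := by
    rw [derivative_C_mul_X_pow_six_add_C_mul_X_sq]
    compute_degree
  have hdeg := natDegree_le_of_derivative_eq_mul hχ hφ' hpoly
  have hcoeff : (V - derivative φ ^ 2 - C E).coeff 6 = 2 * c := by
    rw [sq_derivative_C_mul_X_pow_six_add_C_mul_X_sq]
    simp only [V, coeff_sub, coeff_add, coeff_C_mul_X_pow, coeff_C]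
    norm_num
    field_simp
    ring
  have := le_natDegree_of_ne_zero (hcoeff ▸ mul_ne_zero two_ne_zero hc)
  omega
end

section
/- Let a = 1, b = 1, c = 1, d = -69/8. Set e = (24(1971 - 24√6423)^{1/3} - 8(1971 - 24√6423)^{2/3} + 24(1971 + 24√6423)^{1/3} - 8(1971 + 24√6423)^{2/3} - 1551)/576 and E₂ = (21 + 4(1971 - 24√6423)^{1/3} + 4(1971 + 24√6423)^{1/3})/24. Then ψ₂(x) = (1 - (E₂/2)·x²)·exp(-(1/6)x⁶ - (1/8)x⁴ - (3/16)x²) satisfies -ψ₂'' + (x¹⁰ + x⁸ + x⁶ - (69/8)x⁴ + e·x²)ψ₂ = E₂ψ₂ for all real x. -/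
/-!
For `ψ = p · exp φ` one has `-ψ'' + (V - E) ψ = (-(p'' + 2 p' φ' + p (φ'' + φ'²)) + (V - E) p) · exp φ`.
With `φ' = -(x⁵ + x³/2 + 3x/8)`, so that `φ'²` reproduces `x¹⁰ + x⁸ + x⁶`, and `p = 1 - K x²`, the
polynomial factor loses its `x⁶` term exactly because `d = -69/8`, and its `x⁰`, `x²`, `x⁴` terms
vanish iff `E = 2K + 3/8`, `e = K (3/2 - 2K) - 87/64` and `4K³ - 3K² - 4K - 8 = 0`.
Substituting `K = (s + 3)/12` turns the cubic into `s³ = 171 s + 3942`, solved by Cardano's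
`s = A^{1/3} + B^{1/3}`, because `A B = 57³` and `A + B = 3942`.
-/

open Real

lemma deriv_deriv_mul_exp_s12 {p p' p'' φ φ' φ'' : ℝ → ℝ}
    (hp : ∀ x, HasDerivAt p (p' x) x) (hp' : ∀ x, HasDerivAt p' (p'' x) x)
    (hφ : ∀ x, HasDerivAt φ (φ' x) x) (hφ' : ∀ x, HasDerivAt φ' (φ'' x) x) (x : ℝ) :
    deriv (deriv fun y => p y * exp (φ y)) x
      = (p'' x + 2 * p' x * φ' x + p x * (φ'' x + φ' x ^ 2)) * exp (φ x) := by
  have h_deriv : deriv (fun y => p y * exp (φ y)) = fun y => (p' y + p y * φ' y) * exp (φ y) := by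
    funext y
    exact ((hp y).mul (hφ y).exp).deriv.trans (by ring)
  rw [h_deriv]
  exact (((hp' x).add ((hp x).mul (hφ' x))).mul (hφ x).exp).deriv.trans
    (by simp only [Pi.add_apply, Pi.mul_apply]; ring)

lemma rpow_one_third_pow_three {A : ℝ} (hA : 0 ≤ A) : (A ^ (1/3 : ℝ)) ^ 3 = A := by
  rw [← rpow_natCast, ← rpow_mul hA]; norm_num

lemma rpow_two_thirds {A : ℝ} (hA : 0 ≤ A) : A ^ (2/3 : ℝ) = (A ^ (1/3 : ℝ)) ^ 2 := by
  rw [← rpow_natCast, ← rpow_mul hA]; norm_num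

lemma rpow_one_third_mul_rpow_one_third {A B m : ℝ} (hA : 0 ≤ A) (hB : 0 ≤ B) (hm : 0 ≤ m)
    (hAB : A * B = m ^ 3) : A ^ (1/3 : ℝ) * B ^ (1/3 : ℝ) = m := by
  rw [← mul_rpow hA hB, hAB, ← rpow_natCast, ← rpow_mul hm]; norm_num

lemma rpow_one_third_add_pow_three {A B : ℝ} (hA : 0 ≤ A) (hB : 0 ≤ B) :
    (A ^ (1/3 : ℝ) + B ^ (1/3 : ℝ)) ^ 3
      = 3 * (A ^ (1/3 : ℝ) * B ^ (1/3 : ℝ)) * (A ^ (1/3 : ℝ) + B ^ (1/3 : ℝ)) + (A + B) := by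
  linear_combination rpow_one_third_pow_three hA + rpow_one_third_pow_three hB

noncomputable def decaticState (K x : ℝ) : ℝ :=
  (1 - K * x ^ 2) * exp (-(1/6) * x ^ 6 - (1/8) * x ^ 4 - (3/16) * x ^ 2)

theorem decaticState_eigen_of_cubic {K e E : ℝ} (hK : 4 * K ^ 3 - 3 * K ^ 2 - 4 * K - 8 = 0)
    (hE : E = 2 * K + 3/8) (he : e = K * (3/2 - 2 * K) - 87/64) (x : ℝ) :
    -(deriv (deriv (decaticState K)) x)
      + (x ^ 10 + x ^ 8 + x ^ 6 - (69/8) * x ^ 4 + e * x ^ 2) * decaticState K x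
      = E * decaticState K x := by
  have hp (y : ℝ) : HasDerivAt (fun y => 1 - K * y ^ 2) (-2 * K * y) y :=
    (((hasDerivAt_pow 2 y).const_mul K).const_sub 1).congr_deriv (by push_cast; ring)
  have hp' (y : ℝ) : HasDerivAt (fun y => -2 * K * y) (-2 * K) y := by
    simpa using (hasDerivAt_id y).const_mul (-2 * K)
  have hφ (y : ℝ) : HasDerivAt (fun y => -(1/6) * y ^ 6 - (1/8) * y ^ 4 - (3/16) * y ^ 2)
      (-(y ^ 5 + y ^ 3 / 2 + 3 * y / 8)) y :=
    ((((hasDerivAt_pow 6 y).const_mul (-(1/6))).sub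
      ((hasDerivAt_pow 4 y).const_mul (1/8))).sub
      ((hasDerivAt_pow 2 y).const_mul (3/16))).congr_deriv (by push_cast; ring)
  have hφ' (y : ℝ) : HasDerivAt (fun y => -(y ^ 5 + y ^ 3 / 2 + 3 * y / 8))
      (-(5 * y ^ 4 + 3 * y ^ 2 / 2 + 3 / 8)) y :=
    ((((hasDerivAt_pow 5 y).add ((hasDerivAt_pow 3 y).div_const 2)).add
      (((hasDerivAt_id y).const_mul 3).div_const 8)).neg).congr_deriv (by push_cast; ring)
  unfold decaticState
  rw [deriv_deriv_mul_exp_s12 hp hp' hφ hφ']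
  subst hE he
  linear_combination (x ^ 4 / 2 * exp (-(1/6) * x ^ 6 - (1/8) * x ^ 4 - (3/16) * x ^ 2)) * hK

theorem decatic_second_excited_state_example
    (A B e E₂ : ℝ)
    (hA : A = 1971 - 24 * Real.sqrt 6423)
    (hB : B = 1971 + 24 * Real.sqrt 6423)
    (he : e = (24 * A ^ ((1:ℝ)/3) - 8 * A ^ ((2:ℝ)/3)
          + 24 * B ^ ((1:ℝ)/3) - 8 * B ^ ((2:ℝ)/3) - 1551) / 576)
    (hE : E₂ = (21 + 4 * A ^ ((1:ℝ)/3) + 4 * B ^ ((1:ℝ)/3)) / 24)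
    (ψ : ℝ → ℝ)
    (hψ : ψ = fun x => (1 - ((8 * E₂ - 3) / 16) * x ^ 2)
          * Real.exp (-(1/6) * x ^ 6 - (1/8) * x ^ 4 - (3/16) * x ^ 2)) :
    ∀ x : ℝ, -(deriv (deriv ψ) x)
      + (x ^ 10 + x ^ 8 + x ^ 6 - (69/8) * x ^ 4 + e * x ^ 2) * ψ x
      = E₂ * ψ x := by
  have h_sq : √6423 ^ 2 = 6423 := sq_sqrt (by norm_num)
  have hA0 : 0 ≤ A := by rw [hA]; nlinarith [sqrt_nonneg 6423]
  have hB0 : 0 ≤ B := by rw [hB]; positivity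
  have h_prod : A ^ (1/3 : ℝ) * B ^ (1/3 : ℝ) = 57 :=
    rpow_one_third_mul_rpow_one_third hA0 hB0 (by norm_num)
      (by rw [hA, hB]; linear_combination (-576) * h_sq)
  have h_cubic := rpow_one_third_add_pow_three hA0 hB0
  rw [h_prod, show A + B = 3942 by rw [hA, hB]; ring] at h_cubic
  rw [rpow_two_thirds hA0, rpow_two_thirds hB0] at he
  subst hψ
  exact decaticState_eigen_of_cubic (K := (8 * E₂ - 3) / 16)
    (by rw [hE]; linear_combination h_cubic / 432) (by ring)
    (by rw [he, hE]; linear_combination h_prod / 36)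
end

section
/- For every positive real μ and positive real k, setting a = μ, b = μ, c = kμ, d = (4k-1)μ/8 - 5√μ, e = (1-4k)²μ/64 - (3/2)√μ, the ground-state energy of V(x)=ax¹⁰+bx⁸+cx⁶+dx⁴+ex² equals E₀ = (4k-1)√μ/8; i.e., ψ(x) = exp(-(√a/6)x⁶ - (b/(8√a))x⁴ + ((b²-4ac)/(16a^{3/2}))x²) satisfies -ψ'' + Vψ = E₀ψ for all real x. -/
lemma exp_poly_deriv (α β γ : ℝ) :
    deriv (fun x => Real.exp (α * x ^ 6 + β * x ^ 4 + γ * x ^ 2))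
      = fun x => (6 * α * x ^ 5 + 4 * β * x ^ 3 + 2 * γ * x) *
          Real.exp (α * x ^ 6 + β * x ^ 4 + γ * x ^ 2) := by
  funext x
  have h1 : HasDerivAt (fun x : ℝ => α * x ^ 6 + β * x ^ 4 + γ * x ^ 2)
      (6 * α * x ^ 5 + 4 * β * x ^ 3 + 2 * γ * x) x := by
    have := (((hasDerivAt_pow 6 x).const_mul α).add ((hasDerivAt_pow 4 x).const_mul β)).add
      ((hasDerivAt_pow 2 x).const_mul γ)
    refine this.congr_deriv ?_
    push_cast; ring
  have := h1.exp
  rw [this.deriv]; ring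

theorem table1_row5_ground_state
    (μ k : ℝ) (hμ : 0 < μ) (hk : 0 < k)
    (a b c d e E₀ : ℝ)
    (ha : a = μ) (hb : b = μ) (hc : c = k * μ)
    (hd : d = (4 * k - 1) * μ / 8 - 5 * Real.sqrt μ)
    (he : e = (1 - 4 * k) ^ 2 * μ / 64 - (3/2) * Real.sqrt μ)
    (hE : E₀ = (4 * k - 1) * Real.sqrt μ / 8)
    (ψ : ℝ → ℝ)
    (hψ : ψ = fun x => Real.exp (-(Real.sqrt a / 6) * x ^ 6 - (b / (8 * Real.sqrt a)) * x ^ 4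
          + ((b ^ 2 - 4 * a * c) / (16 * (Real.sqrt a) ^ 3)) * x ^ 2)) :
    ∀ x : ℝ, -(deriv (deriv ψ) x)
      + (a * x ^ 10 + b * x ^ 8 + c * x ^ 6 + d * x ^ 4 + e * x ^ 2) * ψ x
      = E₀ * ψ x := by
  intro x
  set s := Real.sqrt μ with hs
  have hs0 : 0 < s := Real.sqrt_pos.mpr hμ
  have hs2 : s ^ 2 = μ := Real.sq_sqrt hμ.le
  set α : ℝ := -(s / 6) with hα
  set β : ℝ := -(μ / (8 * s)) with hβ
  set γ : ℝ := (μ ^ 2 - 4 * μ * (k * μ)) / (16 * s ^ 3) with hγ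
  have hψ' : ψ = fun x => Real.exp (α * x ^ 6 + β * x ^ 4 + γ * x ^ 2) := by
    rw [hψ]; funext y; rw [ha, hb, hc, ← hs]; rw [hα, hβ, hγ]
    ring_nf
  have hd1 : deriv ψ = fun x => (6 * α * x ^ 5 + 4 * β * x ^ 3 + 2 * γ * x) *
      Real.exp (α * x ^ 6 + β * x ^ 4 + γ * x ^ 2) := by
    rw [hψ']; exact exp_poly_deriv α β γ
  have hd2 : deriv (deriv ψ) x =
      ((30 * α * x ^ 4 + 12 * β * x ^ 2 + 2 * γ)
        + (6 * α * x ^ 5 + 4 * β * x ^ 3 + 2 * γ * x) ^ 2) *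
        Real.exp (α * x ^ 6 + β * x ^ 4 + γ * x ^ 2) := by
    rw [hd1]
    have hg : HasDerivAt (fun x : ℝ => 6 * α * x ^ 5 + 4 * β * x ^ 3 + 2 * γ * x)
        (30 * α * x ^ 4 + 12 * β * x ^ 2 + 2 * γ) x := by
      have := (((hasDerivAt_pow 5 x).const_mul (6*α)).add
        ((hasDerivAt_pow 3 x).const_mul (4*β))).add ((hasDerivAt_id x).const_mul (2*γ))
      refine this.congr_deriv ?_
      push_cast; ring
    have hf : HasDerivAt (fun x : ℝ => Real.exp (α * x ^ 6 + β * x ^ 4 + γ * x ^ 2))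
        ((6 * α * x ^ 5 + 4 * β * x ^ 3 + 2 * γ * x) *
          Real.exp (α * x ^ 6 + β * x ^ 4 + γ * x ^ 2)) x := by
      have h1 : HasDerivAt (fun x : ℝ => α * x ^ 6 + β * x ^ 4 + γ * x ^ 2)
          (6 * α * x ^ 5 + 4 * β * x ^ 3 + 2 * γ * x) x := by
        have := (((hasDerivAt_pow 6 x).const_mul α).add ((hasDerivAt_pow 4 x).const_mul β)).add
          ((hasDerivAt_pow 2 x).const_mul γ)
        refine this.congr_deriv ?_
        push_cast; ring
      simpa [mul_comm] using h1.exp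
    exact (hg.mul hf).deriv.trans (by ring)
  rw [hd2, hψ']
  simp only []
  rw [show (E₀ : ℝ) = (4 * k - 1) * s / 8 from hE]
  set X := Real.exp (α * x ^ 6 + β * x ^ 4 + γ * x ^ 2)
  have key : -((30 * α * x ^ 4 + 12 * β * x ^ 2 + 2 * γ)
        + (6 * α * x ^ 5 + 4 * β * x ^ 3 + 2 * γ * x) ^ 2)
      + (a * x ^ 10 + b * x ^ 8 + c * x ^ 6 + d * x ^ 4 + e * x ^ 2)
      = (4 * k - 1) * s / 8 := by
    subst ha hb hc hd he
    rw [hα, hβ, hγ, ← hs2]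
    field_simp
    ring
  calc -(((30 * α * x ^ 4 + 12 * β * x ^ 2 + 2 * γ)
        + (6 * α * x ^ 5 + 4 * β * x ^ 3 + 2 * γ * x) ^ 2) * X)
      + (a * x ^ 10 + b * x ^ 8 + c * x ^ 6 + d * x ^ 4 + e * x ^ 2) * X
      = (-((30 * α * x ^ 4 + 12 * β * x ^ 2 + 2 * γ)
        + (6 * α * x ^ 5 + 4 * β * x ^ 3 + 2 * γ * x) ^ 2)
      + (a * x ^ 10 + b * x ^ 8 + c * x ^ 6 + d * x ^ 4 + e * x ^ 2)) * X := by ring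
    _ = (4 * k - 1) * s / 8 * X := by rw [key]
end

section
/- With λₙ, sₙ defined as in the asymptotic iteration method from C^∞ functions λ₀, s₀, and δₙ = λₙs_{n-1} - λ_{n-1}sₙ, any C^∞ solution y of y'' = λ₀y' + s₀y satisfies λₙ·y^{(n+1)} - λ_{n-1}·y^{(n+2)} = δₙ·y for all n ≥ 1. -/
/-!
Differentiating the ODE `y'' = λ₀ y' + s₀ y` repeatedly shows `y^{(n+2)} = λₙ y' + sₙ y`; the
AIM recursion for `λₙ, sₙ` is exactly the bookkeeping of one differentiation. Eliminating `y'`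
between the expressions for `y^{(n+1)}` and `y^{(n+2)}` leaves `δₙ y`.
-/

open scoped ContDiff

section AsymptoticIteration

variable {𝕜 : Type*} [NontriviallyNormedField 𝕜] {l s : ℕ → 𝕜 → 𝕜}

theorem contDiff_aim_coeffs (hl0 : ContDiff 𝕜 ∞ (l 0)) (hs0 : ContDiff 𝕜 ∞ (s 0))
    (hl : ∀ n, l (n + 1) = fun x => deriv (l n) x + s n x + l 0 x * l n x)
    (hs : ∀ n, s (n + 1) = fun x => deriv (s n) x + s 0 x * l n x) (n : ℕ) :
    ContDiff 𝕜 ∞ (l n) ∧ ContDiff 𝕜 ∞ (s n) := by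
  induction n with
  | zero => exact ⟨hl0, hs0⟩
  | succ n ih =>
    obtain ⟨hln, hsn⟩ := ih
    refine ⟨?_, ?_⟩
    · rw [hl n]
      exact (hln.iterate_deriv 1).add hsn |>.add (hl0.mul hln)
    · rw [hs n]
      exact (hsn.iterate_deriv 1).add (hs0.mul hln)

theorem deriv_comb_of_deriv_deriv_eq {p q a b y : 𝕜 → 𝕜} {x : 𝕜}
    (ha : DifferentiableAt 𝕜 a x) (hb : DifferentiableAt 𝕜 b x)
    (hy : DifferentiableAt 𝕜 y x) (hy' : DifferentiableAt 𝕜 (deriv y) x)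
    (hode : deriv (deriv y) x = p x * deriv y x + q x * y x) :
    deriv (fun x => a x * deriv y x + b x * y x) x
      = (deriv a x + b x + p x * a x) * deriv y x + (deriv b x + q x * a x) * y x := by
  rw [deriv_fun_add (ha.fun_mul hy') (hb.fun_mul hy), deriv_fun_mul ha hy', deriv_fun_mul hb hy, hode]
  ring

theorem iteratedDeriv_add_two_eq_of_aim (hl0 : ContDiff 𝕜 ∞ (l 0)) (hs0 : ContDiff 𝕜 ∞ (s 0))
    (hl : ∀ n, l (n + 1) = fun x => deriv (l n) x + s n x + l 0 x * l n x)
    (hs : ∀ n, s (n + 1) = fun x => deriv (s n) x + s 0 x * l n x)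
    {y : 𝕜 → 𝕜} (hy : ContDiff 𝕜 ∞ y)
    (hode : ∀ x, deriv (deriv y) x = l 0 x * deriv y x + s 0 x * y x) (n : ℕ) :
    iteratedDeriv (n + 2) y = fun x => l n x * deriv y x + s n x * y x := by
  induction n with
  | zero =>
    rw [iteratedDeriv_succ, iteratedDeriv_one]
    exact funext hode
  | succ n ih =>
    obtain ⟨hln, hsn⟩ := contDiff_aim_coeffs hl0 hs0 hl hs n
    have hdiff {f : 𝕜 → 𝕜} (hf : ContDiff 𝕜 ∞ f) (x : 𝕜) : DifferentiableAt 𝕜 f x :=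
      hf.differentiable (by simp) x
    ext x
    rw [iteratedDeriv_succ, ih, deriv_comb_of_deriv_deriv_eq (hdiff hln x) (hdiff hsn x)
      (hdiff hy x) (hdiff (hy.iterate_deriv 1) x) (hode x), hl n, hs n]

end AsymptoticIteration

theorem aim_delta_relation
    (l s : ℕ → ℝ → ℝ)
    (hl0 : ContDiff ℝ (⊤ : ℕ∞) (l 0)) (hs0 : ContDiff ℝ (⊤ : ℕ∞) (s 0))
    (hl : ∀ n : ℕ, l (n + 1) = fun x => deriv (l n) x + s n x + l 0 x * l n x)
    (hs : ∀ n : ℕ, s (n + 1) = fun x => deriv (s n) x + s 0 x * l n x)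
    (y : ℝ → ℝ) (hy : ContDiff ℝ (⊤ : ℕ∞) y)
    (hode : ∀ x : ℝ, deriv (deriv y) x = l 0 x * deriv y x + s 0 x * y x) :
    ∀ n : ℕ, 1 ≤ n → ∀ x : ℝ,
      l n x * iteratedDeriv (n + 1) y x - l (n - 1) x * iteratedDeriv (n + 2) y x
        = (l n x * s (n - 1) x - l (n - 1) x * s n x) * y x := by
  intro n hn x
  obtain ⟨m, rfl⟩ := Nat.exists_eq_add_of_le' hn
  have hy_deriv := iteratedDeriv_add_two_eq_of_aim hl0 hs0 hl hs hy hode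
  rw [Nat.add_sub_cancel, hy_deriv (m + 1), show m + 1 + 1 = m + 2 from rfl, hy_deriv m]
  ring
end

section
/- If y(x) = c₀ + c₂x² (c₂ ≠ 0) solves the reduced decatic equation χ'' - (2√a x⁵ + (b/√a)x³ - ((b²-4ac)/(4a^{3/2}))x)χ' - ((4ac-b²)/(8a^{3/2}) - E)χ = 0 augmented with x² and x⁴ coefficient terms as in equation (9), with a > 0 and parameters satisfying 8·13·a^{5/2} + 8a²d - 4abc + b³ = 0 (the n = 2 necessary condition), then c₂/c₀ = -(8a^{3/2}E + b² - 4ac)/(16a^{3/2}), i.e., the second-degree polynomial solution is proportional to χ₄(x) = 1 - (P₂(E)/(16a^{3/2}))x² with P₂(E) = 8a^{3/2}E + b² - 4ac. -/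
/-! Only the constant term of the equation matters: at `x = 0` every coefficient of `χ'` and
every `x²`, `x⁴` term of the potential vanishes, leaving `2 c₂ - ((4ac - b²)/(8a^{3/2}) - E) c₀ = 0`.
Since `c₂ ≠ 0` this forces `c₀ ≠ 0`, and the ratio can be solved for. -/

section QuadraticDerivatives

variable {𝕜 : Type*} [NontriviallyNormedField 𝕜] (c0 c2 : 𝕜)

theorem deriv_const_add_mul_sq : deriv (fun x => c0 + c2 * x ^ 2) = fun x => 2 * c2 * x := by
  funext x
  simp only [deriv_const_add', deriv_const_mul_field', deriv_pow_field]
  ring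

theorem deriv_deriv_const_add_mul_sq (x : 𝕜) : deriv (deriv fun x => c0 + c2 * x ^ 2) x = 2 * c2 := by
  rw [deriv_const_add_mul_sq]
  exact congrFun (deriv_const_mul_id' (2 * c2)) x

end QuadraticDerivatives

theorem div_eq_half_of_two_mul_sub_mul_eq_zero {K : Type*} [Field K] [NeZero (2 : K)]
    {c0 c2 k : K} (hc2 : c2 ≠ 0) (h : 2 * c2 - k * c0 = 0) : c2 / c0 = k / 2 := by
  have hc0 : c0 ≠ 0 := by
    rintro rfl
    exact hc2 (by simpa [two_ne_zero] using h)
  field_simp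
  linear_combination h

theorem second_degree_solution_coefficient_ratio_general
    (a b c d e E c0 c2 : ℝ) (ha : 0 < a) (hc2 : c2 ≠ 0)
    (y : ℝ → ℝ) (hy : y = fun x => c0 + c2 * x ^ 2)
    (hode : ∀ x : ℝ, deriv (deriv y) x
      - (2 * Real.sqrt a * x ^ 5 + (b / Real.sqrt a) * x ^ 3
          - ((b ^ 2 - 4 * a * c) / (4 * (Real.sqrt a) ^ 3)) * x) * deriv y x
      - ((4 * a * c - b ^ 2) / (8 * (Real.sqrt a) ^ 3) - E
          + ((64 * a ^ 3 * e + 96 * (Real.sqrt a) ^ 5 * b - b ^ 4 + 8 * a * b ^ 2 * c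
              - 16 * a ^ 2 * c ^ 2) / (64 * a ^ 3)) * x ^ 2
          + ((8 * a ^ 2 * d + 40 * (Real.sqrt a) ^ 5 + b ^ 3 - 4 * a * b * c)
              / (8 * a ^ 2)) * x ^ 4) * y x = 0) :
    c2 / c0 = -(8 * (Real.sqrt a) ^ 3 * E + b ^ 2 - 4 * a * c) / (16 * (Real.sqrt a) ^ 3) := by
  subst hy
  have hconst : 2 * c2 - ((4 * a * c - b ^ 2) / (8 * (Real.sqrt a) ^ 3) - E) * c0 = 0 := by
    simpa [deriv_deriv_const_add_mul_sq, deriv_const_add_mul_sq, mul_comm] using hode 0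
  have hs3 : (Real.sqrt a) ^ 3 ≠ 0 := pow_ne_zero 3 (Real.sqrt_pos.mpr ha).ne'
  rw [div_eq_half_of_two_mul_sub_mul_eq_zero hc2 hconst]
  field_simp
  ring

theorem second_degree_solution_coefficient_ratio
    (a b c d e E c0 c2 : ℝ) (ha : 0 < a) (hc2 : c2 ≠ 0)
    (hnec : 8 * 13 * (Real.sqrt a) ^ 5 + 8 * a ^ 2 * d - 4 * a * b * c + b ^ 3 = 0)
    (y : ℝ → ℝ) (hy : y = fun x => c0 + c2 * x ^ 2)
    (hode : ∀ x : ℝ, deriv (deriv y) x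
      - (2 * Real.sqrt a * x ^ 5 + (b / Real.sqrt a) * x ^ 3
          - ((b ^ 2 - 4 * a * c) / (4 * (Real.sqrt a) ^ 3)) * x) * deriv y x
      - ((4 * a * c - b ^ 2) / (8 * (Real.sqrt a) ^ 3) - E
          + ((64 * a ^ 3 * e + 96 * (Real.sqrt a) ^ 5 * b - b ^ 4 + 8 * a * b ^ 2 * c
              - 16 * a ^ 2 * c ^ 2) / (64 * a ^ 3)) * x ^ 2
          + ((8 * a ^ 2 * d + 40 * (Real.sqrt a) ^ 5 + b ^ 3 - 4 * a * b * c)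
              / (8 * a ^ 2)) * x ^ 4) * y x = 0) :
    c2 / c0 = -(8 * (Real.sqrt a) ^ 3 * E + b ^ 2 - 4 * a * c) / (16 * (Real.sqrt a) ^ 3) :=
  second_degree_solution_coefficient_ratio_general a b c d e E c0 c2 ha hc2 y hy hode
end
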